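/- Let X be a reflexive Banach space such that both X and its dual X* are strictly convex, let A ⊂ X be nonempty, and let f : X → ℝ be Lipschitz continuous on a neighborhood of A. Then there is a unique ã ∈ ∂f(A) with ‖ã‖ = min_{a ∈ ∂f(A)} ‖a‖. Moreover, if 0 ∉ ∂f(A), then there exists a unique optimal descent direction h̃ of f on A, and it is characterized among unit vectors by ⟨ã, h̃⟩ = −‖ã‖. -/

import Mathlib

open Filter Metric Set NormedSpace
open scoped NNReal

variable {X : Type*} [NormedAddCommGroup X] [NormedSpace ℝ X]

/-- Clarke's generalized directional derivative
`f⁰(x;h) = limsup_{y→x, t↓0⁺} (f(y+th) − f(y))/t`. -/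
noncomputable def clarkeDeriv (f : X → ℝ) (x : X) (h : X) : ℝ :=
  Filter.limsup (fun p : X × ℝ => (f (p.1 + p.2 • h) - f p.1) / p.2)
    ((nhds x) ×ˢ (nhdsWithin 0 (Set.Ioi 0)))

/-- Clarke's generalized gradient `∂f(x) = {a ∈ X* : ⟨a,h⟩ ≤ f⁰(x;h) ∀ h}`. -/
def clarkeGrad (f : X → ℝ) (x : X) : Set (StrongDual ℝ X) :=
  {a | ∀ h : X, a h ≤ clarkeDeriv f x h}

/-- Directional derivative of `f` on the set `A`: `f⁰(A;h) = sup_{y∈A} f⁰(y;h)`. -/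
noncomputable def setDeriv (f : X → ℝ) (A : Set X) (h : X) : ℝ :=
  sSup ((fun y => clarkeDeriv f y h) '' A)

/-- Gradient of `f` on the set `A`: the weak*-closed convex hull of `⋃_{y∈A} ∂f(y)`. -/
def setGrad (f : X → ℝ) (A : Set X) : Set (StrongDual ℝ X) :=
  {a | StrongDual.toWeakDual a ∈
    closure ((StrongDual.toWeakDual (𝕜 := ℝ) (E := X)) '' (convexHull ℝ (⋃ y ∈ A, clarkeGrad f y)))}

/-- `h` is an optimal (steepest) descent direction of `f` on `A`. -/
noncomputable def IsOptimalDescent (f : X → ℝ) (A : Set X) (h : X) : Prop :=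
  ‖h‖ = 1 ∧ (∀ h' : X, ‖h'‖ ≤ 1 → setDeriv f A h ≤ setDeriv f A h') ∧ setDeriv f A h < 0

open scoped Topology

/-!
`∂f(A)` is convex and weak*-compact (it lies in the ball of radius `L`), and `f⁰(A; ·)` is its
support function, `f⁰(A; h) = max_{a ∈ ∂f(A)} ⟨a, h⟩`: Hahn–Banach applied to the sublinear map
`f⁰(y; ·)` produces, for every `h`, an `a ∈ ∂f(y)` with `⟨a, h⟩ = f⁰(y; h)`. The norm is
weak*-lower semicontinuous, so it attains its minimum on `∂f(A)`, at a unique `ã` since `X*` is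
strictly convex.

If `ã ≠ 0`, separating `∂f(A)` from the open ball of radius `‖ã‖` gives, by reflexivity, a unit
vector `w` with `⟨a, w⟩ ≥ ‖ã‖` on all of `∂f(A)`. Hence `f⁰(A; -w) ≤ -‖ã‖`, while
`f⁰(A; h) ≥ ⟨ã, h⟩ ≥ -‖ã‖` on the unit ball, so the optimal descent directions are the unit `h`
with `⟨ã, h⟩ = -‖ã‖`. By strict convexity of `X` the only such `h` is `-w`.
-/

lemma map_const_mul_nhdsGT_zero {c : ℝ} (hc : 0 < c) : map (c * ·) (𝓝[>] (0 : ℝ)) = 𝓝[>] 0 := by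
  simpa [Set.image_const_mul_Ioi_zero hc] using
    (Homeomorph.mulLeft₀ c hc.ne').isEmbedding.map_nhdsWithin_eq (Ioi 0) 0

section Clarke

variable {f : X → ℝ} {L : ℝ≥0} {U : Set X} {x : X}

noncomputable def diffQuot (f : X → ℝ) (h : X) (p : X × ℝ) : ℝ := (f (p.1 + p.2 • h) - f p.1) / p.2

lemma clarkeDeriv_eq_limsup_diffQuot (f : X → ℝ) (x h : X) :
    clarkeDeriv f x h = limsup (diffQuot f h) (𝓝 x ×ˢ 𝓝[>] 0) := rfl

lemma tendsto_add_smul_nhds (x h : X) :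
    Tendsto (fun p : X × ℝ => p.1 + p.2 • h) (𝓝 x ×ˢ 𝓝[>] 0) (𝓝 x) := by
  have hsnd : Tendsto (fun p : X × ℝ => p.2) (𝓝 x ×ˢ 𝓝[>] 0) (𝓝 0) :=
    tendsto_snd.mono_right nhdsWithin_le_nhds
  simpa using (tendsto_fst (g := 𝓝[>] (0 : ℝ))).add (hsnd.smul_const h)

lemma eventually_abs_diffQuot_le (hU : U ∈ 𝓝 x) (hf : LipschitzOnWith L f U) (h : X) :
    ∀ᶠ p in 𝓝 x ×ˢ 𝓝[>] 0, |diffQuot f h p| ≤ L * ‖h‖ := by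
  filter_upwards [tendsto_fst hU, tendsto_add_smul_nhds x h hU,
    tendsto_snd self_mem_nhdsWithin] with ⟨y, t⟩ hy hyt (ht : 0 < t)
  have hlip := hf.dist_le_mul _ hyt _ hy
  rw [Real.dist_eq, dist_self_add_left, norm_smul, Real.norm_of_nonneg ht.le] at hlip
  rw [diffQuot, abs_div, abs_of_pos ht, div_le_iff₀ ht]
  linarith

lemma isBoundedUnder_le_diffQuot (hU : U ∈ 𝓝 x) (hf : LipschitzOnWith L f U) (h : X) :
    IsBoundedUnder (· ≤ ·) (𝓝 x ×ˢ 𝓝[>] 0) (diffQuot f h) :=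
  isBoundedUnder_of_eventually_le ((eventually_abs_diffQuot_le hU hf h).mono fun _ hp =>
    (abs_le.1 hp).2)

lemma isBoundedUnder_ge_diffQuot (hU : U ∈ 𝓝 x) (hf : LipschitzOnWith L f U) (h : X) :
    IsBoundedUnder (· ≥ ·) (𝓝 x ×ˢ 𝓝[>] 0) (diffQuot f h) :=
  isBoundedUnder_of_eventually_ge ((eventually_abs_diffQuot_le hU hf h).mono fun _ hp =>
    (abs_le.1 hp).1)

lemma clarkeDeriv_le (hU : U ∈ 𝓝 x) (hf : LipschitzOnWith L f U) (h : X) :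
    clarkeDeriv f x h ≤ L * ‖h‖ :=
  limsup_le_of_le ((isBoundedUnder_ge_diffQuot hU hf h).isCoboundedUnder_le)
    ((eventually_abs_diffQuot_le hU hf h).mono fun _ hp => (abs_le.1 hp).2)

lemma clarkeDeriv_smul (hU : U ∈ 𝓝 x) (hf : LipschitzOnWith L f U) (h : X) {c : ℝ}
    (hc : 0 < c) : clarkeDeriv f x (c • h) = c * clarkeDeriv f x h := by
  have hquot : diffQuot f (c • h) = (c * ·) ∘ diffQuot f h ∘ Prod.map id (c * ·) := by
    ext ⟨y, t⟩
    rcases eq_or_ne t 0 with rfl | ht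
    · simp [diffQuot]
    · simp only [diffQuot, Function.comp, Prod.map, id, smul_smul, mul_comm t c]
      field_simp
  calc clarkeDeriv f x (c • h)
      = limsup (((c * ·) ∘ diffQuot f h) ∘ Prod.map id (c * ·)) (𝓝 x ×ˢ 𝓝[>] 0) := by
        rw [clarkeDeriv_eq_limsup_diffQuot, hquot]; rfl
    _ = limsup ((c * ·) ∘ diffQuot f h) (𝓝 x ×ˢ 𝓝[>] 0) := by
        rw [limsup_comp, ← prod_map_map_eq', map_id, map_const_mul_nhdsGT_zero hc]
    _ = c * clarkeDeriv f x h :=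
        ((monotone_mul_left_of_nonneg hc.le).map_limsup_of_continuousAt _
          (continuous_const_mul c).continuousAt (isBoundedUnder_le_diffQuot hU hf h)
          ((isBoundedUnder_ge_diffQuot hU hf h).isCoboundedUnder_le)).symm

lemma clarkeDeriv_add_le (hU : U ∈ 𝓝 x) (hf : LipschitzOnWith L f U) (h k : X) :
    clarkeDeriv f x (h + k) ≤ clarkeDeriv f x h + clarkeDeriv f x k := by
  set F := 𝓝 x ×ˢ 𝓝[>] (0 : ℝ)
  set ψ : X × ℝ → X × ℝ := fun p => (p.1 + p.2 • k, p.2)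
  have hψ : map ψ F ≤ F := (tendsto_add_smul_nhds x k).prodMk tendsto_snd
  have hquot : diffQuot f (h + k) = diffQuot f h ∘ ψ + diffQuot f k := by
    ext ⟨y, t⟩
    simp only [diffQuot, ψ, Function.comp, Pi.add_apply]
    rw [show y + t • (h + k) = y + t • k + t • h by rw [smul_add]; abel]
    ring
  have hle := (isBoundedUnder_le_diffQuot hU hf h).mono hψ
  have hge := (isBoundedUnder_ge_diffQuot hU hf h).mono hψ
  calc clarkeDeriv f x (h + k)
      ≤ limsup (diffQuot f h ∘ ψ) F + clarkeDeriv f x k := by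
        rw [clarkeDeriv_eq_limsup_diffQuot, hquot]
        exact limsup_add_le hge hle (isBoundedUnder_ge_diffQuot hU hf k).isCoboundedUnder_le
          (isBoundedUnder_le_diffQuot hU hf k)
    _ ≤ clarkeDeriv f x h + clarkeDeriv f x k := by
        gcongr
        rw [limsup_comp]
        exact limsup_le_limsup_of_le hψ hge.isCoboundedUnder_le (isBoundedUnder_le_diffQuot hU hf h)

end Clarke

lemma abs_apply_le_of_forall_apply_le {C : ℝ} {g : X →ₗ[ℝ] ℝ} (hg : ∀ h, g h ≤ C * ‖h‖) (h : X) :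
    |g h| ≤ C * ‖h‖ := by
  have hneg := hg (-h)
  rw [map_neg, norm_neg] at hneg
  exact abs_le.2 ⟨by linarith, hg h⟩

lemma exists_dual_le_sublinear_apply_eq {N : X → ℝ}
    (hN_smul : ∀ c : ℝ, 0 < c → ∀ h, N (c • h) = c * N h)
    (hN_add : ∀ h k, N (h + k) ≤ N h + N k) {C : ℝ} (hC : ∀ h, N h ≤ C * ‖h‖) (h₀ : X) :
    ∃ a : StrongDual ℝ X, (∀ h, a h ≤ N h) ∧ a h₀ = N h₀ := by
  have hN_zero : N 0 = 0 := by
    have h2 := hN_smul 2 two_pos 0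
    rw [smul_zero] at h2
    linarith
  have hN_neg : ∀ h, -N (-h) ≤ N h := fun h => by
    linarith [add_neg_cancel h ▸ hN_add h (-h)]
  obtain ⟨g, hg_ext, hg_le⟩ := exists_extension_of_le_sublinear
    (LinearPMap.mkSpanSingleton' h₀ (N h₀) fun c hc => by
      rcases smul_eq_zero.1 hc with rfl | rfl <;> simp [hN_zero]) N hN_smul hN_add (by
      rintro ⟨_, hv⟩
      obtain ⟨c, rfl⟩ := Submodule.mem_span_singleton.1 hv
      change _ ≤ N (c • h₀)
      rw [LinearPMap.mkSpanSingleton'_apply, RingHom.id_apply, smul_eq_mul]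
      rcases lt_trichotomy c 0 with hc | rfl | hc
      · rw [show c • h₀ = (-c) • -h₀ by simp, hN_smul (-c) (neg_pos.2 hc)]
        nlinarith [hN_neg h₀]
      · simp [hN_zero]
      · rw [hN_smul c hc])
  refine ⟨g.mkContinuous C (abs_apply_le_of_forall_apply_le fun h => (hg_le h).trans (hC h)),
    hg_le, ?_⟩
  exact (hg_ext ⟨h₀, Submodule.mem_span_singleton_self h₀⟩).trans
    (LinearPMap.mkSpanSingleton'_apply_self _ _ _ _)

section ClarkeGrad

variable {f : X → ℝ} {L : ℝ≥0} {U : Set X} {x : X}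

lemma exists_mem_clarkeGrad_apply_eq (hU : U ∈ 𝓝 x) (hf : LipschitzOnWith L f U) (h : X) :
    ∃ a ∈ clarkeGrad f x, a h = clarkeDeriv f x h :=
  exists_dual_le_sublinear_apply_eq (fun _ hc h => clarkeDeriv_smul hU hf h hc)
    (clarkeDeriv_add_le hU hf) (clarkeDeriv_le hU hf) h

lemma norm_le_of_mem_clarkeGrad (hU : U ∈ 𝓝 x) (hf : LipschitzOnWith L f U)
    {a : StrongDual ℝ X} (ha : a ∈ clarkeGrad f x) : ‖a‖ ≤ L :=
  a.opNorm_le_bound L.coe_nonneg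
    (abs_apply_le_of_forall_apply_le (g := a.toLinearMap) fun h =>
      (ha h).trans (clarkeDeriv_le hU hf h))

end ClarkeGrad

lemma WeakDual.lowerSemicontinuous_norm :
    LowerSemicontinuous fun b : WeakDual ℝ X => ‖WeakDual.toStrongDual b‖ := by
  refine lowerSemicontinuous_iff_isClosed_preimage.2 fun r => ?_
  convert WeakDual.isClosed_closedBall (0 : StrongDual ℝ X) r using 1
  ext b
  simp

section SetGrad

variable {f : X → ℝ} {L : ℝ≥0} {U : Set X} {A : Set X}

def setGradWeakStar (f : X → ℝ) (A : Set X) : Set (WeakDual ℝ X) :=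
  closure (StrongDual.toWeakDual (𝕜 := ℝ) (E := X) '' convexHull ℝ (⋃ y ∈ A, clarkeGrad f y))

lemma mem_setGrad_iff {a : StrongDual ℝ X} :
    a ∈ setGrad f A ↔ StrongDual.toWeakDual a ∈ setGradWeakStar f A := Iff.rfl

lemma mem_setGrad_of_mem_clarkeGrad {y : X} (hy : y ∈ A) {a : StrongDual ℝ X}
    (ha : a ∈ clarkeGrad f y) : a ∈ setGrad f A :=
  subset_closure (X := WeakDual ℝ X)
    (mem_image_of_mem _ (subset_convexHull ℝ _ (mem_biUnion hy ha)))

lemma convex_setGradWeakStar : Convex ℝ (setGradWeakStar f A) :=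
  ((convex_convexHull ℝ _).linear_image StrongDual.toWeakDual.toLinearMap).closure

lemma convex_setGrad : Convex ℝ (setGrad f A) :=
  convex_setGradWeakStar.linear_preimage StrongDual.toWeakDual.toLinearMap

lemma norm_le_of_mem_setGrad (hU : IsOpen U) (hf : LipschitzOnWith L f U) (hAU : A ⊆ U)
    {a : StrongDual ℝ X} (ha : a ∈ setGrad f A) : ‖a‖ ≤ L := by
  have hhull : convexHull ℝ (⋃ y ∈ A, clarkeGrad f y) ⊆ closedBall 0 L :=
    convexHull_min (iUnion₂_subset fun y hy b hb => mem_closedBall_zero_iff.2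
      (norm_le_of_mem_clarkeGrad (hU.mem_nhds (hAU hy)) hf hb)) (convex_closedBall _ _)
  exact mem_closedBall_zero_iff.1 (closure_minimal (image_subset_iff.2 hhull)
    (WeakDual.isClosed_closedBall 0 L) ha)

lemma isCompact_setGradWeakStar (hU : IsOpen U) (hf : LipschitzOnWith L f U) (hAU : A ⊆ U) :
    IsCompact (setGradWeakStar f A) :=
  (WeakDual.isCompact_closedBall (0 : StrongDual ℝ X) L).of_isClosed_subset isClosed_closure
    fun b hb => mem_closedBall_zero_iff.2
      (norm_le_of_mem_setGrad hU hf hAU (a := b.toStrongDual) hb)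

lemma apply_le_setDeriv (hU : IsOpen U) (hf : LipschitzOnWith L f U) (hAU : A ⊆ U)
    {a : StrongDual ℝ X} (ha : a ∈ setGrad f A) (h : X) : a h ≤ setDeriv f A h := by
  have hbdd : BddAbove ((fun y => clarkeDeriv f y h) '' A) :=
    ⟨L * ‖h‖, by rintro _ ⟨y, hy, rfl⟩; exact clarkeDeriv_le (hU.mem_nhds (hAU hy)) hf h⟩
  have hhull : convexHull ℝ (⋃ y ∈ A, clarkeGrad f y) ⊆ {b | b h ≤ setDeriv f A h} :=
    convexHull_min (iUnion₂_subset fun y hy b hb => (hb h).trans (le_csSup hbdd ⟨y, hy, rfl⟩))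
      ((convex_Iic _).linear_preimage (ContinuousLinearMap.apply ℝ ℝ h).toLinearMap)
  exact closure_minimal (image_subset_iff.2 hhull)
    (isClosed_Iic.preimage (WeakDual.eval_continuous h)) ha

lemma isGreatest_setDeriv (hU : IsOpen U) (hf : LipschitzOnWith L f U) (hAU : A ⊆ U)
    (hA : A.Nonempty) (h : X) :
    IsGreatest ((fun a : StrongDual ℝ X => a h) '' setGrad f A) (setDeriv f A h) := by
  obtain ⟨y, hy⟩ := hA
  obtain ⟨a, ha, -⟩ := exists_mem_clarkeGrad_apply_eq (hU.mem_nhds (hAU hy)) hf 0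
  obtain ⟨b, hb, hb_max⟩ := (isCompact_setGradWeakStar hU hf hAU).exists_isMaxOn
    ⟨_, mem_setGrad_of_mem_clarkeGrad hy ha⟩ (WeakDual.eval_continuous h).continuousOn
  refine ⟨⟨b.toStrongDual, hb, le_antisymm (apply_le_setDeriv hU hf hAU hb h) ?_⟩, ?_⟩
  · refine csSup_le ⟨_, mem_image_of_mem _ hy⟩ ?_
    rintro _ ⟨z, hz, rfl⟩
    obtain ⟨c, hc, hch⟩ := exists_mem_clarkeGrad_apply_eq (hU.mem_nhds (hAU hz)) hf h
    show clarkeDeriv f z h ≤ b h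
    rw [← hch]
    exact hb_max (mem_setGrad_of_mem_clarkeGrad hz hc)
  · rintro _ ⟨c, hc, rfl⟩
    exact apply_le_setDeriv hU hf hAU hc h

lemma exists_isMinOn_norm_setGrad (hU : IsOpen U) (hf : LipschitzOnWith L f U) (hAU : A ⊆ U)
    (hA : A.Nonempty) : ∃ a ∈ setGrad f A, IsMinOn (‖·‖) (setGrad f A) a := by
  obtain ⟨y, hy⟩ := hA
  obtain ⟨a, ha, -⟩ := exists_mem_clarkeGrad_apply_eq (hU.mem_nhds (hAU hy)) hf 0
  obtain ⟨b, hb, hb_min⟩ := LowerSemicontinuousOn.exists_isMinOn (s := setGradWeakStar f A)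
    ⟨_, mem_setGrad_of_mem_clarkeGrad hy ha⟩ (isCompact_setGradWeakStar hU hf hAU)
    (WeakDual.lowerSemicontinuous_norm.lowerSemicontinuousOn _)
  exact ⟨b.toStrongDual, hb, fun c hc => hb_min (mem_setGrad_iff.1 hc)⟩

end SetGrad

lemma Convex.eq_of_isMinOn_norm {E : Type*} [NormedAddCommGroup E] [NormedSpace ℝ E]
    [StrictConvexSpace ℝ E] {K : Set E} (hK : Convex ℝ K) {a b : E} (ha : a ∈ K) (hb : b ∈ K)
    (ha_min : IsMinOn (‖·‖) K a) (hb_min : IsMinOn (‖·‖) K b) : a = b := by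
  by_contra hne
  have hmid := (norm_midpoint_lt_iff (le_antisymm (ha_min hb) (hb_min ha))).2 hne
  rw [smul_add] at hmid
  exact hmid.not_ge (ha_min (hK ha hb (by norm_num) (by norm_num) (by norm_num)))

lemma eq_of_apply_eq_norm_of_norm_eq_one [StrictConvexSpace ℝ X] {g : StrongDual ℝ X} (hg : g ≠ 0)
    {u v : X} (hu : ‖u‖ = 1) (hv : ‖v‖ = 1) (hgu : g u = ‖g‖) (hgv : g v = ‖g‖) : u = v := by
  refine (sameRay_iff_norm_add.2 (le_antisymm (norm_add_le u v) ?_)).eq_of_norm_eq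
    (hu.trans hv.symm)
  have hg_pos : 0 < ‖g‖ := norm_pos_iff.2 hg
  have hsum : ‖g‖ * 2 ≤ ‖g‖ * ‖u + v‖ := by
    calc ‖g‖ * 2 = g (u + v) := by rw [map_add, hgu, hgv]; ring
      _ ≤ ‖g‖ * ‖u + v‖ := (Real.le_norm_self _).trans (g.le_opNorm _)
  rw [hu, hv]
  linarith [le_of_mul_le_mul_left hsum hg_pos]

lemma exists_norm_eq_one_le_apply_of_convex
    (hrefl : Function.Surjective (inclusionInDoubleDual ℝ X)) {K : Set (StrongDual ℝ X)}
    (hK : Convex ℝ K) (hne : K.Nonempty) {m : ℝ} (hm : 0 < m) (hKm : ∀ a ∈ K, m ≤ ‖a‖) :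
    ∃ w : X, ‖w‖ = 1 ∧ ∀ a ∈ K, m ≤ a w := by
  have hdisj : Disjoint (ball (0 : StrongDual ℝ X) m) K :=
    disjoint_left.2 fun a ha haK => (mem_ball_zero_iff.1 ha).not_ge (hKm a haK)
  obtain ⟨Φ, s, hΦ_ball, hΦ_K⟩ :=
    geometric_hahn_banach_open (convex_ball 0 m) isOpen_ball hK hdisj
  obtain ⟨v, rfl⟩ := hrefl Φ
  simp only [dual_def] at hΦ_ball hΦ_K
  obtain ⟨a₀, ha₀⟩ := hne
  have hs : 0 < s := by simpa using hΦ_ball 0 (mem_ball_self hm)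
  have hv : v ≠ 0 := by
    rintro rfl
    linarith [hΦ_K a₀ ha₀, map_zero a₀]
  have hv_pos : 0 < ‖v‖ := norm_pos_iff.2 hv
  obtain ⟨g, hg_norm, hg_v⟩ := exists_dual_vector ℝ v hv_pos.ne'
  have hmv : m * ‖v‖ ≤ s := by
    by_contra! hlt
    have hball : (s / ‖v‖) • g ∈ ball 0 m := by
      rw [mem_ball_zero_iff, norm_smul, hg_norm, mul_one, Real.norm_of_nonneg (by positivity),
        div_lt_iff₀ hv_pos]
      exact hlt
    have hs_lt := hΦ_ball _ hball
    rw [smul_apply, hg_v, smul_eq_mul, RCLike.ofReal_real_eq_id, id,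
      div_mul_cancel₀ _ hv_pos.ne'] at hs_lt
    exact lt_irrefl s hs_lt
  refine ⟨‖v‖⁻¹ • v, norm_smul_inv_norm hv, fun a ha => ?_⟩
  rw [map_smul, smul_eq_mul, le_inv_mul_iff₀ hv_pos]
  linarith [hΦ_K a ha]

lemma apply_le_norm_of_norm_le_one (g : StrongDual ℝ X) {h : X} (hh : ‖h‖ ≤ 1) : g h ≤ ‖g‖ :=
  (Real.le_norm_self _).trans ((g.le_opNorm h).trans (mul_le_of_le_one_right (norm_nonneg g) hh))

lemma apply_eq_neg_norm_iff_eq_neg [StrictConvexSpace ℝ X] {g : StrongDual ℝ X} (hg : g ≠ 0)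
    {w h : X} (hw : ‖w‖ = 1) (hgw : g w = ‖g‖) (hh : ‖h‖ = 1) : g h = -‖g‖ ↔ h = -w := by
  refine ⟨fun hgh => ?_, by rintro rfl; rw [map_neg, hgw]⟩
  have hgh' : g (-h) = ‖g‖ := by rw [map_neg, hgh, neg_neg]
  rw [← eq_of_apply_eq_norm_of_norm_eq_one hg (by rw [norm_neg, hh]) hw hgh' hgw, neg_neg]

lemma isOptimalDescent_iff_eq_neg [StrictConvexSpace ℝ X] {f : X → ℝ} {A : Set X}
    (hσ : ∀ h, IsGreatest ((fun a : StrongDual ℝ X => a h) '' setGrad f A) (setDeriv f A h))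
    {ã : StrongDual ℝ X} (hã : ã ∈ setGrad f A) (hã0 : ã ≠ 0) {w : X} (hw : ‖w‖ = 1)
    (hw_le : ∀ a ∈ setGrad f A, ‖ã‖ ≤ a w) {h : X} :
    IsOptimalDescent f A h ↔ h = -w := by
  have hã_le : ∀ h', ã h' ≤ setDeriv f A h' := fun h' => (hσ h').2 ⟨ã, hã, rfl⟩
  have hã_ge : ∀ h', ‖h'‖ ≤ 1 → -‖ã‖ ≤ ã h' := fun h' hh' => by
    have hneg := apply_le_norm_of_norm_le_one ã (h := -h') (by rwa [norm_neg])
    rw [map_neg] at hneg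
    linarith
  have hval : setDeriv f A (-w) = -‖ã‖ := by
    obtain ⟨a, ha, ha_eq⟩ := (hσ (-w)).1
    refine le_antisymm ?_ ((hã_ge _ (by rw [norm_neg, hw])).trans (hã_le _))
    rw [← ha_eq]
    change a (-w) ≤ _
    rw [map_neg, neg_le_neg_iff]
    exact hw_le a ha
  have hãw : ã w = ‖ã‖ := le_antisymm (apply_le_norm_of_norm_le_one ã hw.le) (hw_le ã hã)
  constructor
  · rintro ⟨hh, hh_min, -⟩
    refine (apply_eq_neg_norm_iff_eq_neg hã0 hw hãw hh).1 (le_antisymm ?_ (hã_ge h hh.le))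
    exact (hã_le h).trans ((hh_min (-w) (by rw [norm_neg, hw])).trans hval.le)
  · rintro rfl
    exact ⟨by rw [norm_neg, hw], fun h' hh' => hval ▸ (hã_ge h' hh').trans (hã_le h'),
      hval ▸ neg_neg_iff_pos.2 (norm_pos_iff.2 hã0)⟩

theorem unique_minimal_grad_and_unique_optimal_descent_general
    [StrictConvexSpace ℝ X] [StrictConvexSpace ℝ (StrongDual ℝ X)]
    (hrefl : Function.Surjective (inclusionInDoubleDual ℝ X))
    (A : Set X) (hA : A.Nonempty) (f : X → ℝ)
    (hf : ∃ (L : ℝ≥0) (U : Set X), IsOpen U ∧ A ⊆ U ∧ LipschitzOnWith L f U) :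
    (∃! a : StrongDual ℝ X, a ∈ setGrad f A ∧ ∀ b ∈ setGrad f A, ‖a‖ ≤ ‖b‖) ∧
    ((0 : StrongDual ℝ X) ∉ setGrad f A →
      (∃! h : X, IsOptimalDescent f A h) ∧
      ∀ a ∈ setGrad f A, (∀ b ∈ setGrad f A, ‖a‖ ≤ ‖b‖) →
        ∀ h : X, ‖h‖ = 1 → (IsOptimalDescent f A h ↔ a h = -‖a‖)) := by
  obtain ⟨L, U, hU, hAU, hfL⟩ := hf
  obtain ⟨ã, hã, hã_min⟩ := exists_isMinOn_norm_setGrad hU hfL hAU hA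
  have hã_unique : ∀ a ∈ setGrad f A, (∀ b ∈ setGrad f A, ‖a‖ ≤ ‖b‖) → a = ã :=
    fun a ha ha_min => convex_setGrad.eq_of_isMinOn_norm ha hã ha_min hã_min
  refine ⟨⟨ã, ⟨hã, hã_min⟩, fun a ha => hã_unique a ha.1 ha.2⟩, fun h0 => ?_⟩
  have hã0 : ã ≠ 0 := fun h => h0 (h ▸ hã)
  obtain ⟨w, hw, hw_le⟩ := exists_norm_eq_one_le_apply_of_convex hrefl convex_setGrad ⟨ã, hã⟩
    (norm_pos_iff.2 hã0) hã_min
  have hãw : ã w = ‖ã‖ := le_antisymm (apply_le_norm_of_norm_le_one ã hw.le) (hw_le ã hã)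
  have hdescent : ∀ h, IsOptimalDescent f A h ↔ h = -w := fun _ =>
    isOptimalDescent_iff_eq_neg (isGreatest_setDeriv hU hfL hAU hA) hã hã0 hw hw_le
  refine ⟨⟨-w, (hdescent _).2 rfl, fun h => (hdescent h).1⟩, fun a ha ha_min h hh => ?_⟩
  rw [hã_unique a ha ha_min, hdescent, apply_eq_neg_norm_iff_eq_neg hã0 hw hãw hh]

/-- Theorem 3.4 (uniqueness of optimal descent direction): in a reflexive, strictly convex
space with strictly convex dual there is a unique minimal-norm `ã ∈ ∂f(A)`; if moreover
`0 ∉ ∂f(A)` there is a unique optimal descent direction `h̃`, characterized among unit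
vectors by `⟨ã,h̃⟩ = −‖ã‖`. -/
theorem unique_minimal_grad_and_unique_optimal_descent
    [CompleteSpace X] [StrictConvexSpace ℝ X] [StrictConvexSpace ℝ (StrongDual ℝ X)]
    (hrefl : Function.Surjective (inclusionInDoubleDual ℝ X))
    (A : Set X) (hA : A.Nonempty) (f : X → ℝ)
    (hf : ∃ (L : ℝ≥0) (U : Set X), IsOpen U ∧ A ⊆ U ∧ LipschitzOnWith L f U) :
    (∃! a : StrongDual ℝ X, a ∈ setGrad f A ∧ ∀ b ∈ setGrad f A, ‖a‖ ≤ ‖b‖) ∧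
    ((0 : StrongDual ℝ X) ∉ setGrad f A →
      (∃! h : X, IsOptimalDescent f A h) ∧
      ∀ a ∈ setGrad f A, (∀ b ∈ setGrad f A, ‖a‖ ≤ ‖b‖) →
        ∀ h : X, ‖h‖ = 1 → (IsOptimalDescent f A h ↔ a h = -‖a‖)) :=
  unique_minimal_grad_and_unique_optimal_descent_general hrefl A hA f hf
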